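/- Under the hypotheses of the previous construction (Δ not the boundary of a simplex, h_v | m''_v, I = (h_1 m'_1,…,h_n m'_n)), the Scarf complex Γ of I has n vertices and contains Δ as a subcomplex: every face of Δ is a face of Γ. -/

import Mathlib

noncomputable section
attribute [local instance] Classical.propDecidable

/-- The simplicial complex generated by a set of faces: all nonempty subsets. -/
def gen {V : Type} (S : Finset (Finset V)) : Finset (Finset V) :=
  S.biUnion fun F => F.powerset.filter (· ≠ ∅)

/-- The facets (maximal faces) of a complex given by its finite set of faces. -/
def facets {V : Type} (Δ : Finset (Finset V)) : Finset (Finset V) :=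
  Δ.filter fun F => ∀ G ∈ Δ, F ⊆ G → F = G

/-- A (finite, abstract) simplicial complex: nonempty faces, closed under nonempty subsets. -/
def IsComplex {V : Type} (Δ : Finset (Finset V)) : Prop :=
  ∅ ∉ Δ ∧ ∀ F ∈ Δ, ∀ G, G ⊆ F → G ≠ ∅ → G ∈ Δ

/-- `F` is a leaf of `Δ`: `F` is a facet which is either the only facet, or
there is another facet `G` (a joint) with `F ∩ (Δ ∖ F) ⊆ G`, i.e. the
intersection of `F` with any other facet is contained in `G`. -/
def IsLeaf {V : Type} (Δ : Finset (Finset V)) (F : Finset V) : Prop :=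
  F ∈ facets Δ ∧ (facets Δ = {F} ∨
    ∃ G ∈ facets Δ, G ≠ F ∧ ∀ H ∈ facets Δ, H ≠ F → F ∩ H ⊆ G)

def HasLeaf {V : Type} (Δ : Finset (Finset V)) : Prop := ∃ F, IsLeaf Δ F

/-- A forest: every nonempty subcollection (complex generated by a subset of the
facets) has a leaf. -/
def IsForest {V : Type} (Δ : Finset (Finset V)) : Prop :=
  ∀ S ⊆ facets Δ, S.Nonempty → HasLeaf (gen S)

/-- Vertex set of a complex. -/
def vtx {V : Type} (Δ : Finset (Finset V)) : Finset V := Δ.sup id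

/-- Connectedness: nonempty, and any two vertices are joined by a chain of faces. -/
def Conn {V : Type} (Δ : Finset (Finset V)) : Prop :=
  Δ.Nonempty ∧ ∀ u ∈ vtx Δ, ∀ v ∈ vtx Δ,
    Relation.ReflTransGen (fun a b => ∃ σ ∈ Δ, a ∈ σ ∧ b ∈ σ) u v

/-- A simplicial tree is a connected forest. -/
def IsTree {V : Type} (Δ : Finset (Finset V)) : Prop := Conn Δ ∧ IsForest Δ

/-! Monomials in the variables `x_σ`, indexed by the nonempty faces `σ` of a complex
`Δ`.  All monomials arising in the Peeva–Velasco construction and its refinement are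
squarefree, so we represent a squarefree monomial by its finite set of variables
(a `Finset` of faces); then divisibility is `⊆`, lcm is `∪`, and a product of
monomials with disjoint supports is `∪`. -/

/-- The Peeva–Velasco generator `m_v = ∏_{σ ∈ Δ, v ∉ σ} x_σ`. -/
def mPV {V : Type} (Δ : Finset (Finset V)) (v : V) : Finset (Finset V) :=
  Δ.filter fun σ => v ∉ σ

/-- `A_Δ(v)`: the facets of `Δ` not containing `v`. -/
def AF {V : Type} (Δ : Finset (Finset V)) (v : V) : Finset (Finset V) :=
  (facets Δ).filter fun F => v ∉ F

/-- `B_Δ(v)`: the facets of `Δ` containing `v`. -/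
def BF {V : Type} (Δ : Finset (Finset V)) (v : V) : Finset (Finset V) :=
  (facets Δ).filter fun F => v ∈ F

/-- The refined generator `m'_v`: the squarefree product of the variables
`x_{G∖{v}}` for facets `G ∋ v`, the variables `x_F` for facets `F ∌ v`, and the
variables `x_σ` for maximal proper (nonempty) faces `σ` of such facets `F`. -/
def mPV' {V : Type} (Δ : Finset (Finset V)) (v : V) : Finset (Finset V) :=
  ((BF Δ v).image (fun G => G.erase v)).filter (· ≠ ∅) ∪ AF Δ v ∪
    (AF Δ v).biUnion fun F => F.powerset.filter fun σ => σ.card + 1 = F.card ∧ σ ≠ ∅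

/-- `Δ` is the boundary of the full simplex on its `n` vertices: all proper
nonempty subsets of the vertex set. -/
def IsBoundaryOfFullSimplex {n : ℕ} (Δ : Finset (Finset (Fin n))) : Prop :=
  Δ = (Finset.univ : Finset (Fin n)).powerset.filter
        fun s => s ≠ ∅ ∧ s ≠ Finset.univ

/-! Every variable `x_ρ` of `m_v` (a face `ρ ∌ v`) lies below a facet `F`, and `m'_v`
contains `x_F` if `v ∉ F` and `x_{F ∖ v}` otherwise. So for any `m'_v ⊆ g_v ⊆ m_v`, the lcm
of the `m_v` over a set of vertices consists exactly of the faces of `Δ` lying below some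
variable of the lcm of the `g_v`. Equal `g`-lcms therefore force equal `m`-lcms, and every
Scarf face of `J_Δ`, i.e. every face of `Δ`, stays a Scarf face of `(g_1, …, g_n)`. -/

def IsScarfFace {ι α : Type*} [DecidableEq α] (m : ι → Finset α) (σ : Finset ι) : Prop :=
  ∀ τ : Finset ι, τ ≠ σ → τ.biUnion m ≠ σ.biUnion m

lemma IsScarfFace.of_biUnion_eq_imp {ι α β : Type*} [DecidableEq α] [DecidableEq β]
    {m : ι → Finset α} {g : ι → Finset β} {σ : Finset ι} (hσ : IsScarfFace m σ)
    (hmg : ∀ τ : Finset ι, τ.biUnion g = σ.biUnion g → τ.biUnion m = σ.biUnion m) :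
    IsScarfFace g σ :=
  fun τ hne heq => hσ τ hne (hmg τ heq)

def lowerClosureIn {V : Type} (Δ S : Finset (Finset V)) : Finset (Finset V) :=
  Δ.filter fun ρ => ∃ π ∈ S, ρ ⊆ π

section PeevaVelasco

variable {V : Type} {Δ : Finset (Finset V)}

lemma facets_subset (Δ : Finset (Finset V)) : facets Δ ⊆ Δ :=
  Finset.filter_subset _ _

lemma exists_mem_facets_superset {ρ : Finset V} (hρ : ρ ∈ Δ) : ∃ F ∈ facets Δ, ρ ⊆ F := by
  obtain ⟨F, hF, hmax⟩ := (Δ.filter (ρ ⊆ ·)).exists_maximal ⟨ρ, by simp [hρ]⟩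
  rw [Finset.mem_filter] at hF
  refine ⟨F, Finset.mem_filter.mpr ⟨hF.1, fun G hG hFG => ?_⟩, hF.2⟩
  by_contra hne
  exact hne (le_antisymm hFG (hmax (Finset.mem_filter.mpr ⟨hG, hF.2.trans hFG⟩) hFG))

lemma mem_mPV {v : V} {π : Finset V} : π ∈ mPV Δ v ↔ π ∈ Δ ∧ v ∉ π :=
  Finset.mem_filter

lemma mem_mPV'_of_mem_facets {v : V} {F : Finset V} (hF : F ∈ facets Δ) (hv : v ∉ F) :
    F ∈ mPV' Δ v := by
  simp only [mPV', AF, Finset.mem_union, Finset.mem_filter]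
  exact Or.inl (Or.inr ⟨hF, hv⟩)

lemma erase_mem_mPV' {v : V} {G : Finset V} (hG : G ∈ facets Δ) (hv : v ∈ G)
    (hne : G.erase v ≠ ∅) : G.erase v ∈ mPV' Δ v := by
  simp only [mPV', BF, Finset.mem_union, Finset.mem_filter, Finset.mem_image]
  exact Or.inl (Or.inl ⟨⟨G, ⟨hG, hv⟩, rfl⟩, hne⟩)

lemma mPV'_subset_mPV (hΔ : IsComplex Δ) (v : V) : mPV' Δ v ⊆ mPV Δ v := by
  intro π
  simp only [mPV', AF, BF, mem_mPV, Finset.mem_union, Finset.mem_filter, Finset.mem_image,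
    Finset.mem_biUnion, Finset.mem_powerset]
  rintro ((⟨⟨G, ⟨hG, -⟩, rfl⟩, hne⟩ | ⟨hF, hvF⟩) | ⟨F, ⟨hF, hvF⟩, hπF, -, hne⟩)
  · exact ⟨hΔ.2 G (facets_subset Δ hG) _ (Finset.erase_subset _ _) hne, Finset.notMem_erase _ _⟩
  · exact ⟨facets_subset Δ hF, hvF⟩
  · exact ⟨hΔ.2 F (facets_subset Δ hF) _ hπF hne, fun hv => hvF (hπF hv)⟩

-- `DecidableEq (Finset V)` rather than `DecidableEq V`: `erase` must keep the classical
-- instance it has inside `mPV'`.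
lemma biUnion_mPV_eq_lowerClosureIn [DecidableEq (Finset V)] (hΔ : IsComplex Δ)
    {g : V → Finset (Finset V)} (hlow : ∀ v, mPV' Δ v ⊆ g v) (hup : ∀ v, g v ⊆ mPV Δ v)
    (τ : Finset V) :
    τ.biUnion (mPV Δ) = lowerClosureIn Δ (τ.biUnion g) := by
  ext ρ
  simp only [lowerClosureIn, Finset.mem_biUnion, Finset.mem_filter, mem_mPV]
  constructor
  · rintro ⟨v, hv, hρΔ, hvρ⟩
    obtain ⟨F, hF, hρF⟩ := exists_mem_facets_superset hρΔ
    refine ⟨hρΔ, ?_⟩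
    by_cases hvF : v ∈ F
    · have hρF' : ρ ⊆ F.erase v := Finset.subset_erase.mpr ⟨hρF, hvρ⟩
      have hne : F.erase v ≠ ∅ := fun h => hΔ.1 (Finset.subset_empty.mp (h ▸ hρF') ▸ hρΔ)
      exact ⟨F.erase v, ⟨v, hv, hlow v (erase_mem_mPV' hF hvF hne)⟩, hρF'⟩
    · exact ⟨F, ⟨v, hv, hlow v (mem_mPV'_of_mem_facets hF hvF)⟩, hρF⟩
  · rintro ⟨hρΔ, π, ⟨v, hv, hπ⟩, hρπ⟩
    exact ⟨v, hv, hρΔ, fun hvρ => (mem_mPV.mp (hup v hπ)).2 (hρπ hvρ)⟩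

end PeevaVelasco

theorem scarf_of_scaled_contains_general {n : ℕ} (Δ : Finset (Finset (Fin n)))
    (hΔ : IsComplex Δ) (hvtx : ∀ v : Fin n, ({v} : Finset (Fin n)) ∈ Δ)
    (hScarfJ : ∀ σ : Finset (Fin n), σ.Nonempty →
      (σ ∈ Δ ↔ ∀ τ : Finset (Fin n), τ ≠ σ →
        τ.biUnion (mPV Δ) ≠ σ.biUnion (mPV Δ)))
    (h : Fin n → Finset (Finset (Fin n)))
    (hh : ∀ v : Fin n, h v ⊆ mPV Δ v \ mPV' Δ v)
    (g : Fin n → Finset (Finset (Fin n)))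
    (hg : ∀ v : Fin n, g v = h v ∪ mPV' Δ v) :
    (∀ i : Fin n, ∀ τ : Finset (Fin n), τ ≠ {i} →
      τ.biUnion g ≠ ({i} : Finset (Fin n)).biUnion g) ∧
    (∀ σ ∈ Δ, ∀ τ : Finset (Fin n), τ ≠ σ →
      τ.biUnion g ≠ σ.biUnion g) := by
  have hlow : ∀ v, mPV' Δ v ⊆ g v := fun v => hg v ▸ Finset.subset_union_right
  have hup : ∀ v, g v ⊆ mPV Δ v := fun v =>
    hg v ▸ Finset.union_subset (fun _ hπ => (Finset.mem_sdiff.mp (hh v hπ)).1)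
      (mPV'_subset_mPV hΔ v)
  have hscarf : ∀ σ ∈ Δ, IsScarfFace g σ := by
    intro σ hσ
    have hσne : σ.Nonempty := Finset.nonempty_iff_ne_empty.mpr fun hσ0 => hΔ.1 (hσ0 ▸ hσ)
    refine IsScarfFace.of_biUnion_eq_imp ((hScarfJ σ hσne).mp hσ) fun τ heq => ?_
    rw [biUnion_mPV_eq_lowerClosureIn hΔ hlow hup, biUnion_mPV_eq_lowerClosureIn hΔ hlow hup,
      heq]
  exact ⟨fun i => hscarf {i} (hvtx i), hscarf⟩

/-- With generators `g_v = h_v m'_v` where `h_v ∣ m''_v = m_v/m'_v`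
(squarefree monomials represented by their supports), and assuming (as known) that
`Δ` is the Scarf complex of `J_Δ`, the Scarf complex `Γ` of
`I = (g_1, …, g_n)` has all `n` vertices, and contains `Δ` as a subcomplex: every
(nonempty) face of `Δ` is a face of `Γ`.  Membership of `σ` in the Scarf complex of
`(g_1, …, g_n)` means that the lcm of the `g`-labels of `σ` differs from that of
every other subset. -/
theorem scarf_of_scaled_contains {n : ℕ} (Δ : Finset (Finset (Fin n)))
    (hΔ : IsComplex Δ) (hvtx : ∀ v : Fin n, ({v} : Finset (Fin n)) ∈ Δ)
    (hnb : ¬ IsBoundaryOfFullSimplex Δ)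
    (hScarfJ : ∀ σ : Finset (Fin n), σ.Nonempty →
      (σ ∈ Δ ↔ ∀ τ : Finset (Fin n), τ ≠ σ →
        τ.biUnion (mPV Δ) ≠ σ.biUnion (mPV Δ)))
    (h : Fin n → Finset (Finset (Fin n)))
    (hh : ∀ v : Fin n, h v ⊆ mPV Δ v \ mPV' Δ v)
    (g : Fin n → Finset (Finset (Fin n)))
    (hg : ∀ v : Fin n, g v = h v ∪ mPV' Δ v) :
    (∀ i : Fin n, ∀ τ : Finset (Fin n), τ ≠ {i} →
      τ.biUnion g ≠ ({i} : Finset (Fin n)).biUnion g) ∧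
    (∀ σ ∈ Δ, ∀ τ : Finset (Fin n), τ ≠ σ →
      τ.biUnion g ≠ σ.biUnion g) :=
  scarf_of_scaled_contains_general Δ hΔ hvtx hScarfJ h hh g hg
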